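/- Let X be a topological space, r : X → A a continuous retraction onto a subspace A ⊆ X, m ∈ A and l ∈ X. If the man has a strategy in A for starting points m and r(l), then the man has a strategy in X for starting points m and l. -/

import Mathlib

/-- A continuous path `[0,∞) → X` starting at `x`. -/
def PathFrom (X : Type*) [TopologicalSpace X] (x : X) : Type _ :=
  {γ : NNReal → X // Continuous γ ∧ γ 0 = x}

/-- A strategy for the lion: man starts at `m`, lion at `l`; the lion captures the man
at some time, and the no-lookahead rule holds. -/
def IsLionStrategy {X : Type*} [TopologicalSpace X] (m l : X)
    (S : PathFrom X m → PathFrom X l) : Prop :=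
  (∀ α : PathFrom X m, ∃ t : NNReal, (S α).1 t = α.1 t) ∧
  (∀ (α α' : PathFrom X m) (t : NNReal),
    (∀ s < t, α.1 s = α'.1 s) → ∀ s ≤ t, (S α).1 s = (S α').1 s)

/-- A strategy for the man: man starts at `m`, lion at `l`; the man evades the lion
at all times, and the no-lookahead rule holds. -/
def IsManStrategy {X : Type*} [TopologicalSpace X] (m l : X)
    (S : PathFrom X l → PathFrom X m) : Prop :=
  (∀ (β : PathFrom X l) (t : NNReal), (S β).1 t ≠ β.1 t) ∧
  (∀ (β β' : PathFrom X l) (t : NNReal),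
    (∀ s < t, β.1 s = β'.1 s) → ∀ s ≤ t, (S β).1 s = (S β').1 s)

namespace PathFrom

variable {X Y : Type*} [TopologicalSpace X] [TopologicalSpace Y] {x : X}

def map (f : X → Y) (hf : Continuous f) (γ : PathFrom X x) : PathFrom Y (f x) :=
  ⟨f ∘ γ.1, hf.comp γ.2.1, congrArg f γ.2.2⟩

@[simp]
theorem map_apply (f : X → Y) (hf : Continuous f) (γ : PathFrom X x) (t : NNReal) :
    (γ.map f hf).1 t = f (γ.1 t) :=
  rfl

end PathFrom

section Transfer

variable {X Y : Type*} [TopologicalSpace X] [TopologicalSpace Y]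
  (f : X → Y) (hf : Continuous f) (g : Y → X) (hg : Continuous g) {m : Y} {l : X}

def transferManStrategy (S : PathFrom Y (f l) → PathFrom Y m) : PathFrom X l → PathFrom X (g m) :=
  fun β => (S (β.map f hf)).map g hg

variable {f g}

/-- A capture `g (S t) = β t` in `X` would give, after applying `f`, the capture
`S t = f (β t)` in `Y`. -/
theorem IsManStrategy.transfer (hfg : Function.LeftInverse f g)
    {S : PathFrom Y (f l) → PathFrom Y m} (hS : IsManStrategy m (f l) S) :
    IsManStrategy (g m) l (transferManStrategy f hf g hg S) := by
  obtain ⟨hevade, hcausal⟩ := hS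
  refine ⟨fun β t hcapture => hevade (β.map f hf) t ?_, fun β β' t hagree s hs => ?_⟩
  · simpa [transferManStrategy, hfg _] using congrArg f hcapture
  · simp only [transferManStrategy, PathFrom.map_apply]
    exact congrArg g <| hcausal _ _ t (fun s hs => by simp [hagree s hs]) s hs

end Transfer

/-- If `r : X → A` is a continuous retraction onto a subspace `A`, `m ∈ A`,
`l ∈ X`, and the man has a strategy in `A` for starting points `m, r l`, then the man has
a strategy in `X` for starting points `m, l`. -/
theorem stmt_12 {X : Type*} [TopologicalSpace X] (A : Set X)
    (r : X → A) (hr : Continuous r) (hretr : ∀ a : A, r (a : X) = a)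
    (m : A) (l : X)
    (h : ∃ S : PathFrom A (r l) → PathFrom A m, IsManStrategy m (r l) S) :
    ∃ S : PathFrom X l → PathFrom X (m : X), IsManStrategy (m : X) l S := by
  obtain ⟨S, hS⟩ := h
  exact ⟨_, hS.transfer hr continuous_subtype_val hretr⟩
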